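/- Let K ≥ 1 be an integer and let σ, R_L, c be positive real numbers. Set Q = c + 1/(2σ²) and χ = (2K−1)/(2σ²). Then the double integral ∫_0^{R_L} [ ∫_{r_1}^{R_L} exp(−c·r_f²)·(r_f/σ²)·exp(−r_f²/(2σ²)) dr_f ] · exp(r_1²/(2σ²)) · (2K r_1/σ²)·exp(−K r_1²/σ²) dr_1 equals (K/(2σ⁴·Q)) · [ (1 − exp(−(Q+χ)·R_L²))/(Q+χ) − (exp(−Q·R_L²) − exp(−(Q+χ)·R_L²))/χ ], which can equivalently be written as (K/(2σ⁴·Q)) · [ 1/(Q+χ) + Q·exp(−(Q+χ)·R_L²)/(χ·(Q+χ)) − exp(−Q·R_L²)/χ ]. -/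

import Mathlib

open Real

lemma aux_int (a : ℝ) (ha : a ≠ 0) (s t : ℝ) :
    ∫ x in s..t, x * Real.exp (-a * x ^ 2) =
      (Real.exp (-a * s ^ 2) - Real.exp (-a * t ^ 2)) / (2 * a) := by
  have h : ∀ x : ℝ, HasDerivAt (fun x : ℝ => -Real.exp (-a * x ^ 2) / (2 * a))
      (x * Real.exp (-a * x ^ 2)) x := by
    intro x
    have h1 : HasDerivAt (fun x : ℝ => -a * x ^ 2) (-a * (2 * x)) x := by
      simpa using ((hasDerivAt_pow 2 x).const_mul (-a))
    have h3 : HasDerivAt (fun x : ℝ => -Real.exp (-a * x ^ 2) / (2 * a))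
        (-(Real.exp (-a * x ^ 2) * (-a * (2 * x))) / (2 * a)) x :=
      (h1.exp.neg).div_const (2 * a)
    convert h3 using 1
    field_simp
  rw [intervalIntegral.integral_eq_sub_of_hasDerivAt (fun x _ => h x)
    (Continuous.intervalIntegrable (by fun_prop) s t)]
  ring

/-- The exact double-integral evaluation behind Corollary 2 (closed-form far-user
coverage probability under the loose-network special case with `α_L = 2`). -/
theorem far_user_coverage_closed_form
    (K : ℕ) (hK : 1 ≤ K)
    (σ RL c : ℝ) (hσ : 0 < σ) (hRL : 0 < RL) (hc : 0 < c)
    (Q χ : ℝ)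
    (hQ : Q = c + 1 / (2 * σ ^ 2))
    (hχ : χ = (2 * (K : ℝ) - 1) / (2 * σ ^ 2)) :
    (∫ r₁ in (0 : ℝ)..RL,
        (∫ rf in r₁..RL,
            Real.exp (-c * rf ^ 2) * (rf / σ ^ 2) *
              Real.exp (-(rf ^ 2) / (2 * σ ^ 2))) *
          Real.exp (r₁ ^ 2 / (2 * σ ^ 2)) *
          ((2 * K * r₁ / σ ^ 2) * Real.exp (-(K : ℝ) * r₁ ^ 2 / σ ^ 2))) =
      ((K : ℝ) / (2 * σ ^ 4 * Q)) *
        ((1 - Real.exp (-(Q + χ) * RL ^ 2)) / (Q + χ) -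
          (Real.exp (-Q * RL ^ 2) - Real.exp (-(Q + χ) * RL ^ 2)) / χ) := by
  have hσ2 : (0 : ℝ) < σ ^ 2 := by positivity
  have hK1 : (1 : ℝ) ≤ (K : ℝ) := by exact_mod_cast hK
  have hQpos : 0 < Q := by rw [hQ]; positivity
  have hχpos : 0 < χ := by
    rw [hχ]; apply div_pos (by linarith) (by positivity)
  have hQχ : 0 < Q + χ := by linarith
  -- inner integral evaluation
  have hin : ∀ r₁ : ℝ,
      (∫ rf in r₁..RL,
          Real.exp (-c * rf ^ 2) * (rf / σ ^ 2) *
            Real.exp (-(rf ^ 2) / (2 * σ ^ 2))) =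
      (1 / σ ^ 2) * ((Real.exp (-Q * r₁ ^ 2) - Real.exp (-Q * RL ^ 2)) / (2 * Q)) := by
    intro r₁
    have : (∫ rf in r₁..RL,
        Real.exp (-c * rf ^ 2) * (rf / σ ^ 2) *
          Real.exp (-(rf ^ 2) / (2 * σ ^ 2))) =
        ∫ rf in r₁..RL, (1 / σ ^ 2) * (rf * Real.exp (-Q * rf ^ 2)) := by
      apply intervalIntegral.integral_congr
      intro x _
      simp only
      rw [hQ, show -(c + 1 / (2 * σ ^ 2)) * x ^ 2 = -c * x ^ 2 + -x ^ 2 / (2 * σ ^ 2) by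
        field_simp; ring, Real.exp_add]
      ring
    rw [this, intervalIntegral.integral_const_mul, aux_int Q hQpos.ne' r₁ RL]
  -- rewrite outer integrand
  have hE : ∀ x : ℝ,
      ((1 / σ ^ 2) * ((Real.exp (-Q * x ^ 2) - Real.exp (-Q * RL ^ 2)) / (2 * Q))) *
        Real.exp (x ^ 2 / (2 * σ ^ 2)) *
        ((2 * K * x / σ ^ 2) * Real.exp (-(K : ℝ) * x ^ 2 / σ ^ 2)) =
      ((K : ℝ) / (σ ^ 4 * Q)) * (x * Real.exp (-(Q + χ) * x ^ 2)) -
        ((K : ℝ) * Real.exp (-Q * RL ^ 2) / (σ ^ 4 * Q)) * (x * Real.exp (-χ * x ^ 2)) := by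
    intro x
    have e1 : Real.exp (-(Q + χ) * x ^ 2) =
        Real.exp (-Q * x ^ 2) * Real.exp (x ^ 2 / (2 * σ ^ 2)) *
          Real.exp (-(K : ℝ) * x ^ 2 / σ ^ 2) := by
      rw [← Real.exp_add, ← Real.exp_add]
      congr 1
      rw [hχ]
      field_simp
      ring
    have e2 : Real.exp (-χ * x ^ 2) =
        Real.exp (x ^ 2 / (2 * σ ^ 2)) * Real.exp (-(K : ℝ) * x ^ 2 / σ ^ 2) := by
      rw [← Real.exp_add]
      congr 1
      rw [hχ]
      field_simp
      ring
    rw [e1, e2]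
    field_simp
  calc (∫ r₁ in (0 : ℝ)..RL,
        (∫ rf in r₁..RL,
            Real.exp (-c * rf ^ 2) * (rf / σ ^ 2) *
              Real.exp (-(rf ^ 2) / (2 * σ ^ 2))) *
          Real.exp (r₁ ^ 2 / (2 * σ ^ 2)) *
          ((2 * K * r₁ / σ ^ 2) * Real.exp (-(K : ℝ) * r₁ ^ 2 / σ ^ 2)))
      = ∫ r₁ in (0 : ℝ)..RL,
          (((K : ℝ) / (σ ^ 4 * Q)) * (r₁ * Real.exp (-(Q + χ) * r₁ ^ 2)) -
            ((K : ℝ) * Real.exp (-Q * RL ^ 2) / (σ ^ 4 * Q)) *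
              (r₁ * Real.exp (-χ * r₁ ^ 2))) := by
        apply intervalIntegral.integral_congr
        intro x _
        simp only
        rw [hin x, hE x]
    _ = ((K : ℝ) / (σ ^ 4 * Q)) * (∫ r₁ in (0 : ℝ)..RL, r₁ * Real.exp (-(Q + χ) * r₁ ^ 2)) -
          (((K : ℝ) * Real.exp (-Q * RL ^ 2) / (σ ^ 4 * Q)) *
            (∫ r₁ in (0 : ℝ)..RL, r₁ * Real.exp (-χ * r₁ ^ 2))) := by
        rw [intervalIntegral.integral_sub, intervalIntegral.integral_const_mul,
          intervalIntegral.integral_const_mul]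
        · exact (Continuous.intervalIntegrable (by fun_prop) 0 RL)
        · exact (Continuous.intervalIntegrable (by fun_prop) 0 RL)
    _ = _ := by
        rw [aux_int (Q + χ) hQχ.ne' 0 RL, aux_int χ hχpos.ne' 0 RL]
        have hA : Real.exp (-(Q + χ) * RL ^ 2) =
            Real.exp (-Q * RL ^ 2) * Real.exp (-χ * RL ^ 2) := by
          rw [← Real.exp_add]; congr 1; ring
        rw [hA]
        simp only [ne_eq, OfNat.ofNat_ne_zero, not_false_eq_true, zero_pow, neg_zero,
          mul_zero, zero_mul, Real.exp_zero]
        field_simp
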